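/- arXiv:2211.06051 — 12 statements merged into one kernel-verified Lean document; each statement's English description precedes it below -/
import Mathlib

section
/- Let n ≥ 1 and let M, N be n×n complex matrices such that Nᴴ·M is a Hermitian matrix (i.e. the generalized eigenvalue problem Mz = λNz is Hermitian). If z ∈ ℂⁿ and λ ∈ ℂ satisfy M·z = λ·(N·z), then (Mᴴ·M)·z = λ²·((Nᴴ·N)·z). In other words, every eigenvector of the Hermitian problem Mz = λNz is an eigenvector of the folded problem Mᴴ M z = μ Nᴴ N z with eigenvalue μ = λ². -/
open Matrix

namespace Matrix

theorem conjTranspose_mul_comm_of_isHermitian {R m n : Type*} [NonUnitalSemiring R] [StarRing R]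
    [Fintype m] {M N : Matrix m n R} (h : (Nᴴ * M).IsHermitian) : Mᴴ * N = Nᴴ * M := by
  simpa only [conjTranspose_mul, conjTranspose_conjTranspose] using h.eq

theorem conjTranspose_mul_self_mulVec_of_mulVec_eq_smul {R m n : Type*} [CommSemiring R]
    [StarRing R] [Fintype m] [Fintype n] {M N : Matrix m n R}
    (h : (Nᴴ * M).IsHermitian) {z : n → R} {c : R} (hz : M *ᵥ z = c • N *ᵥ z) :
    (Mᴴ * M) *ᵥ z = c ^ 2 • (Nᴴ * N) *ᵥ z :=
  calc (Mᴴ * M) *ᵥ z = c • (Mᴴ * N) *ᵥ z := by rw [← mulVec_mulVec, hz, mulVec_smul, mulVec_mulVec]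
    _ = c • Nᴴ *ᵥ (M *ᵥ z) := by rw [conjTranspose_mul_comm_of_isHermitian h, mulVec_mulVec]
    _ = c ^ 2 • (Nᴴ * N) *ᵥ z := by rw [hz, mulVec_smul, smul_smul, ← sq, mulVec_mulVec]

end Matrix

theorem folded_spectrum_general {n : ℕ} (M N : Matrix (Fin n) (Fin n) ℂ)
    (hHerm : (Nᴴ * M).IsHermitian) (z : Fin n → ℂ) (lam : ℂ)
    (hz : M.mulVec z = lam • N.mulVec z) :
    (Mᴴ * M).mulVec z = lam ^ 2 • (Nᴴ * N).mulVec z :=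
  conjTranspose_mul_self_mulVec_of_mulVec_eq_smul hHerm hz

/-- Every eigenpair `(λ, z)` of a Hermitian generalized eigenvalue problem
`Mz = λ Nz` (meaning `Nᴴ M` is Hermitian) is an eigenpair of the folded
problem `Mᴴ M z = λ² Nᴴ N z`. -/
theorem folded_spectrum {n : ℕ} (hn : 1 ≤ n) (M N : Matrix (Fin n) (Fin n) ℂ)
    (hHerm : (Nᴴ * M).IsHermitian) (z : Fin n → ℂ) (lam : ℂ)
    (hz : M.mulVec z = lam • N.mulVec z) :
    (Mᴴ * M).mulVec z = lam ^ 2 • (Nᴴ * N).mulVec z :=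
  folded_spectrum_general M N hHerm z lam hz
end

section
/- Let A, B be Hermitian n×n complex matrices such that the real linear span span_ℝ{A, B} contains a positive definite matrix. Then there exist n×n complex matrices M, N such that Nᴴ·M is Hermitian and span_ℝ{Mᴴ·M, Nᴴ·N} = span_ℝ{A, B}. -/
/-!
Pick a positive definite `C` in the span and a second generator `D` among `A`, `B`. With
`R = √C` and `S = R⁻¹ D R⁻¹`, the matrix `1 + ε S` is positive semidefinite for small `ε > 0`
because `S` has finite spectrum. For `T = √(1 + ε S)` the pair `M = R`, `N = T R` has
`Nᴴ M = R T R` Hermitian, `Mᴴ M = C` and `Nᴴ N = C + ε D`, and these span the same plane as `C, D`.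
-/

open Matrix
open scoped ComplexOrder MatrixOrder

section Span
variable {K V : Type*} [Field K] [AddCommGroup V] [Module K V]

theorem span_pair_smul_add_smul_eq (x y : V) (a : K) {b : K} (hb : b ≠ 0) :
    Submodule.span K {a • x + b • y, x} = Submodule.span K ({x, y} : Set V) := by
  refine le_antisymm (Submodule.span_le.mpr ?_) (Submodule.span_le.mpr ?_) <;>
    rintro _ (rfl | rfl)
  · exact Submodule.mem_span_pair.mpr ⟨a, b, rfl⟩
  · exact Submodule.subset_span (.inl rfl)
  · exact Submodule.subset_span (.inr rfl)
  · exact Submodule.mem_span_pair.mpr ⟨b⁻¹, -(b⁻¹ * a), by simp [smul_add, smul_smul, hb]⟩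

theorem exists_mem_pair_span_pair_eq {x y z : V} (hz : z ∈ Submodule.span K {x, y})
    (hz0 : z ≠ 0) : ∃ w ∈ ({x, y} : Set V), Submodule.span K {z, w} = Submodule.span K {x, y} := by
  obtain ⟨a, b, rfl⟩ := Submodule.mem_span_pair.mp hz
  by_cases hb : b = 0
  · have ha : a ≠ 0 := by rintro rfl; simp [hb] at hz0
    refine ⟨y, .inr rfl, ?_⟩
    rw [add_comm, span_pair_smul_add_smul_eq y x b ha, Set.pair_comm]
  · exact ⟨x, .inl rfl, span_pair_smul_add_smul_eq x y a hb⟩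

end Span

section Matrix
variable {𝕜 : Type*} [RCLike 𝕜] {n : Type*} [Fintype n] [DecidableEq n]

theorem Matrix.IsHermitian.exists_pos_nonneg_one_add_smul {S : Matrix n n 𝕜}
    (hS : S.IsHermitian) : ∃ ε : ℝ, 0 < ε ∧ 0 ≤ 1 + ε • S := by
  obtain ⟨r, hr⟩ := (-S).finite_real_spectrum.bddAbove
  set r' := max r 1
  have hr' : 0 < r' := lt_of_lt_of_le one_pos (le_max_right _ _)
  have hle : -S ≤ algebraMap ℝ _ r' :=
    (le_algebraMap_iff_spectrum_le hS.isSelfAdjoint.neg).mpr fun x hx ↦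
      (hr hx).trans (le_max_left _ _)
  refine ⟨r'⁻¹, inv_pos.mpr hr', ?_⟩
  have : 1 + r'⁻¹ • S = r'⁻¹ • (algebraMap ℝ _ r' + S) := by
    rw [Algebra.algebraMap_eq_smul_one, smul_add, smul_smul, inv_mul_cancel₀ hr'.ne', one_smul]
  rw [this]
  exact smul_nonneg (inv_nonneg.mpr hr'.le) (by rwa [neg_le_iff_add_nonneg] at hle)

theorem Matrix.PosDef.exists_conjTranspose_mul_self_eq_add_smul {C D : Matrix n n 𝕜}
    (hC : C.PosDef) (hD : D.IsHermitian) :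
    ∃ ε : ℝ, ε ≠ 0 ∧ ∃ M N : Matrix n n 𝕜, (Nᴴ * M).IsHermitian ∧
      Mᴴ * M = C ∧ Nᴴ * N = C + ε • D := by
  set R := CFC.sqrt C
  have hR : R.IsHermitian := (CFC.sqrt_nonneg C).posSemidef.isHermitian
  have hRR : R * R = C := CFC.sqrt_mul_sqrt_self C hC.posSemidef.nonneg
  have hRdet : IsUnit R.det :=
    (isUnit_iff_isUnit_det R).mp (CFC.isUnit_sqrt_iff_isStrictlyPositive.mpr hC.isStrictlyPositive)
  have hRinv : (R⁻¹)ᴴ = R⁻¹ := hR.inv.eq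
  set S := (R⁻¹)ᴴ * D * R⁻¹
  obtain ⟨ε, hε, hS⟩ := (isHermitian_conjTranspose_mul_mul R⁻¹ hD).exists_pos_nonneg_one_add_smul
  set T := CFC.sqrt (1 + ε • S)
  have hT : T.IsHermitian := (CFC.sqrt_nonneg _).posSemidef.isHermitian
  have hTT : T * T = 1 + ε • S := CFC.sqrt_mul_sqrt_self _ hS
  have hRSR : R * S * R = D := by
    simp only [S, hRinv, ← mul_assoc, mul_nonsing_inv R hRdet, one_mul]
    rw [mul_assoc, nonsing_inv_mul R hRdet, mul_one]
  refine ⟨ε, hε.ne', R, T * R, ?_, by rw [hR.eq, hRR], ?_⟩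
  · rw [conjTranspose_mul, hT.eq]
    simpa [hR.eq] using isHermitian_conjTranspose_mul_mul R hT
  · calc (T * R)ᴴ * (T * R) = R * (T * T) * R := by
          simp only [conjTranspose_mul, hT.eq, hR.eq, mul_assoc]
      _ = C + ε • D := by
          rw [hTT, mul_add, add_mul, mul_one, hRR, Matrix.mul_smul, smul_mul_assoc, hRSR]

theorem Matrix.PosDef.exists_span_conjTranspose_mul_self_eq {C D : Matrix n n 𝕜}
    (hC : C.PosDef) (hD : D.IsHermitian) :
    ∃ M N : Matrix n n 𝕜, (Nᴴ * M).IsHermitian ∧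
      Submodule.span ℝ {Mᴴ * M, Nᴴ * N} = Submodule.span ℝ {C, D} := by
  obtain ⟨ε, hε, M, N, hNM, hM, hN⟩ := hC.exists_conjTranspose_mul_self_eq_add_smul hD
  refine ⟨M, N, hNM, ?_⟩
  rw [hM, hN, Set.pair_comm]
  simpa using span_pair_smul_add_smul_eq C D (1 : ℝ) hε

end Matrix

/-- A two-dimensional real span of Hermitian matrices containing a positive
definite element has a "square root": a Hermitian eigenvalue problem returning
it under folding. -/
theorem span_has_square_root {n : ℕ} (A B : Matrix (Fin n) (Fin n) ℂ)
    (hA : A.IsHermitian) (hB : B.IsHermitian)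
    (hpos : ∃ C ∈ Submodule.span ℝ ({A, B} : Set (Matrix (Fin n) (Fin n) ℂ)), C.PosDef) :
    ∃ M N : Matrix (Fin n) (Fin n) ℂ, (Nᴴ * M).IsHermitian ∧
      Submodule.span ℝ ({Mᴴ * M, Nᴴ * N} : Set (Matrix (Fin n) (Fin n) ℂ)) =
        Submodule.span ℝ ({A, B} : Set (Matrix (Fin n) (Fin n) ℂ)) := by
  obtain ⟨C, hCAB, hC⟩ := hpos
  rcases isEmpty_or_nonempty (Fin n) with _ | _
  · exact ⟨0, 0, by simp, Subsingleton.elim _ _⟩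
  obtain ⟨D, hD, hCD⟩ := exists_mem_pair_span_pair_eq hCAB hC.isStrictlyPositive.isUnit.ne_zero
  have hDH : D.IsHermitian := by rcases hD with rfl | rfl <;> assumption
  obtain ⟨M, N, hNM, hMN⟩ := hC.exists_span_conjTranspose_mul_self_eq hDH
  exact ⟨M, N, hNM, hMN.trans hCD⟩
end

section
/- Let M, N be n×n complex matrices with N invertible and Nᴴ·M Hermitian. Let σ ⊆ ℂ be the spectrum of the matrix M·N⁻¹. Then for every μ ∈ ℂ and every nonzero z ∈ ℂⁿ, writing rq = ⟪N·z, M·z⟫ / ‖N·z‖², one has dist(μ, σ)² ≤ |rq − μ|² + ‖M·z‖²/‖N·z‖² − |rq|², where dist(μ, σ) is the distance from μ to the set σ. -/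
/-!
`A = M N⁻¹ = N⁻ᴴ (Nᴴ M) N⁻¹` is a congruence of a Hermitian matrix, hence Hermitian, and with
`w = N z` we have `A w = M z`. Expanding `w` in an orthonormal eigenbasis of `A` gives the
residual bound `dist(μ, σ) ‖w‖ ≤ ‖A w - μ w‖`. Since `rq • w` is the orthogonal projection of
`M z` onto the line through `w`, Pythagoras turns `‖M z - μ w‖² / ‖w‖²` into
`|rq - μ|² + ‖M z‖² / ‖w‖² - |rq|²`.
-/

open Matrix BigOperators

/-- The standard inner product on `ℂⁿ`, conjugate-linear in the first argument. -/
noncomputable def ip {n : ℕ} (x y : Fin n → ℂ) : ℂ :=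
  ∑ i, (starRingEnd ℂ) (x i) * y i

/-- The Euclidean norm on `ℂⁿ`. -/
noncomputable def vnorm {n : ℕ} (x : Fin n → ℂ) : ℝ :=
  Real.sqrt (∑ i, ‖x i‖ ^ 2)

open WithLp (toLp)
open scoped InnerProductSpace

lemma ip_eq_inner {n : ℕ} (x y : Fin n → ℂ) : ip x y = ⟪toLp 2 x, toLp 2 y⟫_ℂ := by
  simp [ip, PiLp.inner_apply, mul_comm]

lemma vnorm_eq_norm {n : ℕ} (x : Fin n → ℂ) : vnorm x = ‖toLp 2 x‖ := by
  simp [vnorm, EuclideanSpace.norm_eq]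

section RayleighQuotient

variable {𝕜 E : Type*} [RCLike 𝕜] [NormedAddCommGroup E] [InnerProductSpace 𝕜 E]

theorem norm_sub_smul_sq_eq_add {w : E} (hw : w ≠ 0) (u : E) (c : 𝕜) :
    ‖u - c • w‖ ^ 2 = ‖u - (⟪w, u⟫_𝕜 / (‖w‖ : 𝕜) ^ 2) • w‖ ^ 2
      + ‖⟪w, u⟫_𝕜 / (‖w‖ : 𝕜) ^ 2 - c‖ ^ 2 * ‖w‖ ^ 2 := by
  set r : 𝕜 := ⟪w, u⟫_𝕜 / (‖w‖ : 𝕜) ^ 2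
  have hw' : (‖w‖ : 𝕜) ^ 2 ≠ 0 := by simpa using hw
  have hperp : ⟪w, u - r • w⟫_𝕜 = 0 := by
    rw [inner_sub_right, inner_smul_right, inner_self_eq_norm_sq_to_K, div_mul_cancel₀ _ hw',
      sub_self]
  have horth : ⟪u - r • w, (r - c) • w⟫_𝕜 = 0 := by
    rw [inner_smul_right, ← inner_conj_symm, hperp, map_zero, mul_zero]
  calc ‖u - c • w‖ ^ 2 = ‖(u - r • w) + (r - c) • w‖ ^ 2 := by
        congr 2; rw [sub_smul]; abel
    _ = _ := by rw [@norm_add_sq 𝕜, horth, norm_smul, mul_pow]; simp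

theorem norm_sub_smul_sq_div_norm_sq {w : E} (hw : w ≠ 0) (u : E) (μ : 𝕜) :
    ‖u - μ • w‖ ^ 2 / ‖w‖ ^ 2 = ‖⟪w, u⟫_𝕜 / (‖w‖ : 𝕜) ^ 2 - μ‖ ^ 2 + ‖u‖ ^ 2 / ‖w‖ ^ 2
      - ‖⟪w, u⟫_𝕜 / (‖w‖ : 𝕜) ^ 2‖ ^ 2 := by
  have hu := norm_sub_smul_sq_eq_add hw u (0 : 𝕜)
  rw [zero_smul, sub_zero, sub_zero] at hu
  have hw' : ‖w‖ ^ 2 ≠ 0 := by positivity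
  rw [norm_sub_smul_sq_eq_add hw u μ, hu]
  field_simp
  ring

end RayleighQuotient

theorem LinearMap.IsSymmetric.infDist_sq_mul_norm_sq_le {𝕜 E : Type*} [RCLike 𝕜]
    [NormedAddCommGroup E] [InnerProductSpace 𝕜 E] [FiniteDimensional 𝕜 E] {T : E →ₗ[𝕜] E}
    (hT : T.IsSymmetric) (μ : 𝕜) (x : E) :
    Metric.infDist μ {c | Module.End.HasEigenvalue T c} ^ 2 * ‖x‖ ^ 2 ≤ ‖T x - μ • x‖ ^ 2 := by
  set b := hT.eigenvectorBasis rfl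
  rw [← b.repr.norm_map x, ← b.repr.norm_map (T x - μ • x), EuclideanSpace.norm_sq_eq,
    EuclideanSpace.norm_sq_eq, Finset.mul_sum]
  gcongr with i
  have hrepr : b.repr (T x - μ • x) i = (hT.eigenvalues rfl i - μ) * b.repr x i := by
    simp only [b, map_sub, map_smul, PiLp.sub_apply, PiLp.smul_apply, smul_eq_mul,
      hT.eigenvectorBasis_apply_self_apply]
    ring
  rw [hrepr, norm_mul, mul_pow]
  gcongr
  · exact Metric.infDist_nonneg
  · rw [← dist_eq_norm, dist_comm]
    exact Metric.infDist_le_dist_of_mem (hT.hasEigenvalue_eigenvalues rfl i)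

namespace Matrix

variable {𝕜 ι : Type*} [RCLike 𝕜] [Fintype ι] [DecidableEq ι]

theorem setOf_hasEigenvalue_toEuclideanLin (A : Matrix ι ι 𝕜) :
    {c | Module.End.HasEigenvalue (toEuclideanLin A) c} = {c | ∃ v, v ≠ 0 ∧ A *ᵥ v = c • v} := by
  ext c
  constructor
  · intro h
    obtain ⟨v, hv, hv0⟩ := h.exists_hasEigenvector
    exact ⟨WithLp.ofLp v, by simpa using hv0,
      congrArg WithLp.ofLp (Module.End.mem_eigenspace_iff.mp hv)⟩
  · rintro ⟨v, hv0, hv⟩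
    exact Module.End.hasEigenvalue_of_hasEigenvector
      ⟨Module.End.mem_eigenspace_iff.mpr (congrArg (toLp 2) hv), by simpa using hv0⟩

theorem IsHermitian.infDist_sq_mul_norm_sq_le {A : Matrix ι ι 𝕜} (hA : A.IsHermitian) (μ : 𝕜)
    (w : ι → 𝕜) :
    Metric.infDist μ {c | ∃ v, v ≠ 0 ∧ A *ᵥ v = c • v} ^ 2 * ‖toLp 2 w‖ ^ 2
      ≤ ‖toLp 2 (A *ᵥ w - μ • w)‖ ^ 2 := by
  rw [← setOf_hasEigenvalue_toEuclideanLin]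
  exact (isSymmetric_toEuclideanLin_iff.mpr hA).infDist_sq_mul_norm_sq_le μ (toLp 2 w)

theorem IsHermitian.mul_nonsing_inv_of_conjTranspose_mul {M N : Matrix ι ι 𝕜}
    (hN : IsUnit N.det) (h : (Nᴴ * M).IsHermitian) : (M * N⁻¹).IsHermitian := by
  have hcongr : M * N⁻¹ = N⁻¹ᴴ * (Nᴴ * M) * N⁻¹ := by
    rw [← Matrix.mul_assoc, ← conjTranspose_mul, mul_nonsing_inv _ hN, conjTranspose_one,
      Matrix.one_mul]
  rw [hcongr]
  exact isHermitian_conjTranspose_mul_mul _ h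

end Matrix

/-- Intertwining of Rayleigh quotients and optimal quotients in eigenvalue
estimation for a Hermitian problem `Mz = λNz` with `N` invertible:
`dist(μ, σ(MN⁻¹))² ≤ |rq − μ|² + ‖Mz‖²/‖Nz‖² − |rq|²`. -/
theorem dist_sq_le_quotients {n : ℕ} (M N : Matrix (Fin n) (Fin n) ℂ)
    (hN : IsUnit N.det) (hHerm : (Nᴴ * M).IsHermitian)
    (μ : ℂ) (z : Fin n → ℂ) (hz : z ≠ 0) :
    Metric.infDist μ
        {lam : ℂ | ∃ v : Fin n → ℂ, v ≠ 0 ∧ (M * N⁻¹).mulVec v = lam • v} ^ 2 ≤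
      ‖ip (N.mulVec z) (M.mulVec z) / ((vnorm (N.mulVec z) : ℂ) ^ 2) - μ‖ ^ 2
        + vnorm (M.mulVec z) ^ 2 / vnorm (N.mulVec z) ^ 2
        - ‖ip (N.mulVec z) (M.mulVec z) / ((vnorm (N.mulVec z) : ℂ) ^ 2)‖ ^ 2 := by
  have hA := hHerm.mul_nonsing_inv_of_conjTranspose_mul hN
  have hMz : (M * N⁻¹) *ᵥ (N *ᵥ z) = M *ᵥ z := by
    rw [mulVec_mulVec, nonsing_inv_mul_cancel_right _ _ hN]
  have hNz : toLp 2 (N *ᵥ z) ≠ 0 := by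
    simpa using mt (eq_zero_of_mulVec_eq_zero hN.ne_zero) hz
  rw [ip_eq_inner, vnorm_eq_norm, vnorm_eq_norm]
  calc Metric.infDist μ {lam | ∃ v, v ≠ 0 ∧ (M * N⁻¹) *ᵥ v = lam • v} ^ 2
      ≤ ‖toLp 2 (M *ᵥ z) - μ • toLp 2 (N *ᵥ z)‖ ^ 2 / ‖toLp 2 (N *ᵥ z)‖ ^ 2 := by
        rw [le_div_iff₀ (by positivity)]
        simpa [hMz] using hA.infDist_sq_mul_norm_sq_le μ (N *ᵥ z)
    _ = _ := norm_sub_smul_sq_div_norm_sq hNz _ μ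
end

section
/- Let A, B : ℂⁿ → ℂⁿ be continuous maps such that A and B do not vanish simultaneously at any nonzero z, i.e. there is no z ≠ 0 with A(z) = 0 and B(z) = 0. Then the set S = { λ ∈ ℂ : there exists z ∈ ℂⁿ with ‖z‖ = 1 and A(z) = λ·B(z) } is a closed subset of ℂ. -/
/-! The eigenvalue set is the projection to `ℂ` of the closed set of pairs `(λ, z)` with
`A z = λ • B z` and `z` on the unit sphere; since the sphere is compact, projecting along it
is a closed map. -/

open Metric

theorem IsCompact.isClosed_setOf_exists_mem {X Y : Type*} [TopologicalSpace X]
    [TopologicalSpace Y] {K : Set Y} (hK : IsCompact K) {p : X → Y → Prop}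
    (hp : IsClosed {q : X × Y | p q.1 q.2}) : IsClosed {x | ∃ y ∈ K, p x y} := by
  have : CompactSpace K := isCompact_iff_compactSpace.mp hK
  have hpK : IsClosed {q : X × K | p q.1 q.2} :=
    hp.preimage (continuous_fst.prodMk (continuous_subtype_val.comp continuous_snd))
  convert isClosedMap_fst_of_compactSpace _ hpK using 1
  ext x
  simp

theorem isClosed_setOf_exists_mem_eq_smul {𝕜 X E : Type*} [TopologicalSpace 𝕜]
    [TopologicalSpace X] [TopologicalSpace E] [SMul 𝕜 E] [ContinuousSMul 𝕜 E] [T2Space E]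
    {A B : X → E} (hA : Continuous A) (hB : Continuous B) {K : Set X} (hK : IsCompact K) :
    IsClosed {c : 𝕜 | ∃ z ∈ K, A z = c • B z} :=
  hK.isClosed_setOf_exists_mem <|
    isClosed_eq (hA.comp continuous_snd) (continuous_fst.smul (hB.comp continuous_snd))

theorem spectrum_isClosed_general {n : ℕ}
    (A B : EuclideanSpace ℂ (Fin n) → EuclideanSpace ℂ (Fin n))
    (hA : Continuous A) (hB : Continuous B) :
    IsClosed {lam : ℂ | ∃ z : EuclideanSpace ℂ (Fin n), ‖z‖ = 1 ∧ A z = lam • B z} := by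
  simpa only [← mem_sphere_zero_iff_norm] using
    isClosed_setOf_exists_mem_eq_smul (𝕜 := ℂ) hA hB (isCompact_sphere 0 1)

/-- For a homogeneous eigenvalue problem `A(z) = λ B(z)` with continuous `A`, `B`
not vanishing simultaneously at nonzero points, the set of eigenvalues (with
eigenvectors on the unit sphere) is closed. -/
theorem spectrum_isClosed {n : ℕ}
    (A B : EuclideanSpace ℂ (Fin n) → EuclideanSpace ℂ (Fin n))
    (hA : Continuous A) (hB : Continuous B)
    (h : ∀ z : EuclideanSpace ℂ (Fin n), z ≠ 0 → ¬(A z = 0 ∧ B z = 0)) :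
    IsClosed {lam : ℂ | ∃ z : EuclideanSpace ℂ (Fin n), ‖z‖ = 1 ∧ A z = lam • B z} :=
  spectrum_isClosed_general A B hA hB
end

section
/- Let A, B : ℂⁿ → ℂⁿ be continuous maps such that B(z) ≠ 0 for every z ≠ 0. Then the set S = { λ ∈ ℂ : there exists z ∈ ℂⁿ with ‖z‖ = 1 and A(z) = λ·B(z) } is a compact subset of ℂ. -/
/-!
An eigenvector `z` determines its eigenvalue: if `A z = λ • B z` with `B z ≠ 0`, then
`λ = ⟪B z, A z⟫ / ‖B z‖²`. This Rayleigh-type quotient is continuous wherever `B` does not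
vanish, so the spectrum is the continuous image of the compact set of unit eigenvectors.
-/

open Set

section

variable {𝕜 E F : Type*} [RCLike 𝕜] [NormedAddCommGroup E] [InnerProductSpace 𝕜 E]

theorem inner_div_norm_sq_eq_of_eq_smul {a b : E} {c : 𝕜} (hb : b ≠ 0) (h : a = c • b) :
    inner 𝕜 b a / (‖b‖ : 𝕜) ^ 2 = c := by
  rw [h, inner_smul_right, inner_self_eq_norm_sq_to_K,
    mul_div_cancel_right₀ _ (by simpa using hb)]

variable [TopologicalSpace F] [T2Space F]

theorem IsCompact.setOf_exists_eq_smul {K : Set F} (hK : IsCompact K) {A B : F → E}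
    (hA : ContinuousOn A K) (hB : ContinuousOn B K) (hBK : ∀ z ∈ K, B z ≠ 0) :
    IsCompact {c : 𝕜 | ∃ z ∈ K, A z = c • B z} := by
  set ρ : F → 𝕜 := fun z => inner 𝕜 (B z) (A z) / (‖B z‖ : 𝕜) ^ 2
  have hρ : ContinuousOn ρ K :=
    (hB.inner hA).div ((RCLike.continuous_ofReal.comp_continuousOn hB.norm).pow 2)
      fun z hz => by simpa using hBK z hz
  have hT : IsCompact (K ∩ (fun z => (A z, ρ z • B z)) ⁻¹' Set.diagonal E) :=
    hK.of_isClosed_subset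
      ((hA.prodMk (hρ.smul hB)).preimage_isClosed_of_isClosed hK.isClosed isClosed_diagonal)
      inter_subset_left
  convert hT.image_of_continuousOn (hρ.mono inter_subset_left) using 1
  ext c
  constructor
  · rintro ⟨z, hz, hAz⟩
    have hρz : ρ z = c := inner_div_norm_sq_eq_of_eq_smul (hBK z hz) hAz
    exact ⟨z, ⟨hz, by simp [hρz, hAz]⟩, hρz⟩
  · rintro ⟨z, ⟨hz, hAz⟩, rfl⟩
    exact ⟨z, hz, hAz⟩

end

/-- For a homogeneous eigenvalue problem `A(z) = λ B(z)` with continuous `A`, `B`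
and `B` not vanishing at nonzero points, the set of eigenvalues (with
eigenvectors on the unit sphere) is compact. -/
theorem spectrum_isCompact {n : ℕ}
    (A B : EuclideanSpace ℂ (Fin n) → EuclideanSpace ℂ (Fin n))
    (hA : Continuous A) (hB : Continuous B)
    (h : ∀ z : EuclideanSpace ℂ (Fin n), z ≠ 0 → B z ≠ 0) :
    IsCompact {lam : ℂ | ∃ z : EuclideanSpace ℂ (Fin n), ‖z‖ = 1 ∧ A z = lam • B z} := by
  simpa only [mem_sphere_zero_iff_norm] using
    (isCompact_sphere (0 : EuclideanSpace ℂ (Fin n)) 1).setOf_exists_eq_smul (𝕜 := ℂ)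
      hA.continuousOn hB.continuousOn fun z hz => h z (ne_zero_of_mem_unit_sphere ⟨z, hz⟩)
end

section
/- Let n ≥ 1, let k > 0 be real, and let f, g : ℂⁿ → ℝ be differentiable (as functions of the underlying real variables) with f(0) = 0, g(0) = 0, and f(r·z) = r^{k+1}·f(z), g(r·z) = r^{k+1}·g(z) for all real r > 0 and all z ∈ ℂⁿ. Suppose g(z) ≠ 0 for all z ≠ 0. Let A, B : ℂⁿ → ℂⁿ be the conjugate co-gradients of f and g respectively, i.e. for all z, v ∈ ℂⁿ the real Fréchet derivatives satisfy Df(z)[v] = 2·Re⟪v, A(z)⟫ and Dg(z)[v] = 2·Re⟪v, B(z)⟫. Then the spectrum of the gradient eigenvalue problem A(z) = λB(z) is nonempty: there exist z ≠ 0 and a real λ with A(z) = λ·B(z). -/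
/-!
Since `f` and `g` are homogeneous of the same degree, `f / g` is invariant under positive
scaling, so its maximum on the unit sphere (compact, and nonempty as `n ≥ 1`) is a maximum on
all of `ℂⁿ ∖ {0}`, hence a local maximum. At an interior critical point `z` of `f / g` one has
`Df(z) = (f z / g z) • Dg(z)`, which translates into `A z = (f z / g z) • B z` because a vector
`w` with `Re⟪v, w⟫ = 0` for all `v` vanishes.
-/

open Filter Topology

theorem IsLocalMax.fderiv_eq_div_smul_fderiv {E : Type*} [NormedAddCommGroup E] [NormedSpace ℝ E]
    {f g : E → ℝ} {x : E} (hmax : IsLocalMax (fun y => f y / g y) x)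
    (hf : DifferentiableAt ℝ f x) (hg : DifferentiableAt ℝ g x) (hgx : g x ≠ 0) :
    fderiv ℝ f x = (f x / g x) • fderiv ℝ g x := by
  have hdiff : DifferentiableAt ℝ (fun y => f y / g y) x := by fun_prop (disch := exact hgx)
  have hq : HasFDerivAt (fun y => f y / g y) (0 : E →L[ℝ] ℝ) x :=
    hmax.fderiv_eq_zero ▸ hdiff.hasFDerivAt
  have hf_eq : f =ᶠ[𝓝 x] fun y => f y / g y * g y :=
    (hg.continuousAt.eventually_ne hgx).mono fun y hy => (div_mul_cancel₀ _ hy).symm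
  simpa using ((hq.mul hg.hasFDerivAt).congr_of_eventuallyEq hf_eq).fderiv

theorem exists_isMaxOn_compl_zero_of_smul_invariant {E : Type*} [NormedAddCommGroup E]
    [NormedSpace ℝ E] [FiniteDimensional ℝ E] [Nontrivial E] {q : E → ℝ}
    (hq : ContinuousOn q {0}ᶜ) (hinv : ∀ r : ℝ, 0 < r → ∀ z, q (r • z) = q z) :
    ∃ x ≠ 0, IsMaxOn q {0}ᶜ x := by
  have hsphere : Metric.sphere (0 : E) 1 ⊆ {0}ᶜ := fun z hz =>
    ne_zero_of_mem_unit_sphere ⟨z, hz⟩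
  obtain ⟨x, hx, hmax⟩ := (isCompact_sphere (0 : E) 1).exists_isMaxOn
    (NormedSpace.sphere_nonempty.mpr zero_le_one) (hq.mono hsphere)
  refine ⟨x, hsphere hx, fun z (hz : z ≠ 0) => ?_⟩
  have hz' : 0 < ‖z‖⁻¹ := inv_pos.mpr (norm_pos_iff.mpr hz)
  rw [Set.mem_ofPred_eq, ← hinv _ hz' z]
  exact hmax (by simp [norm_smul, hz])

theorem div_apply_smul_of_homogeneous {E : Type*} [SMul ℝ E] {f g : E → ℝ} {d : ℝ}
    (hf : ∀ r : ℝ, 0 < r → ∀ z, f (r • z) = r ^ d * f z)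
    (hg : ∀ r : ℝ, 0 < r → ∀ z, g (r • z) = r ^ d * g z) (r : ℝ) (hr : 0 < r) (z : E) :
    f (r • z) / g (r • z) = f z / g z := by
  rw [hf r hr, hg r hr, mul_div_mul_left _ _ (Real.rpow_pos_of_pos hr d).ne']

theorem eq_ofReal_smul_of_re_inner_eq {𝕜 E : Type*} [RCLike 𝕜] [NormedAddCommGroup E]
    [InnerProductSpace 𝕜 E] {a b : E} {c : ℝ}
    (h : ∀ v, RCLike.re (inner 𝕜 v a) = c * RCLike.re (inner 𝕜 v b)) :
    a = (c : 𝕜) • b := by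
  have hre : ∀ v, RCLike.re (inner 𝕜 v (a - (c : 𝕜) • b)) = 0 := fun v => by
    rw [inner_sub_right, inner_smul_right, map_sub, RCLike.re_ofReal_mul, h, sub_self]
  exact sub_eq_zero.mp (re_inner_self_nonpos.mp (hre _).le)

theorem gradient_spectrum_nonempty_general {n : ℕ} (hn : 1 ≤ n) (k : ℝ)
    (f g : EuclideanSpace ℂ (Fin n) → ℝ)
    (hf : Differentiable ℝ f) (hg : Differentiable ℝ g)
    (hfhom : ∀ r : ℝ, 0 < r → ∀ z, f (r • z) = r ^ (k + 1) * f z)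
    (hghom : ∀ r : ℝ, 0 < r → ∀ z, g (r • z) = r ^ (k + 1) * g z)
    (hgne : ∀ z : EuclideanSpace ℂ (Fin n), z ≠ 0 → g z ≠ 0)
    (A B : EuclideanSpace ℂ (Fin n) → EuclideanSpace ℂ (Fin n))
    (hAgrad : ∀ z v : EuclideanSpace ℂ (Fin n),
      fderiv ℝ f z v = 2 * (inner ℂ v (A z) : ℂ).re)
    (hBgrad : ∀ z v : EuclideanSpace ℂ (Fin n),
      fderiv ℝ g z v = 2 * (inner ℂ v (B z) : ℂ).re) :
    ∃ z : EuclideanSpace ℂ (Fin n), z ≠ 0 ∧ ∃ lam : ℝ, A z = (lam : ℂ) • B z := by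
  have : Nonempty (Fin n) := ⟨⟨0, hn⟩⟩
  obtain ⟨z, hz, hmax⟩ := exists_isMaxOn_compl_zero_of_smul_invariant (q := fun z => f z / g z)
    (hf.continuous.continuousOn.div hg.continuous.continuousOn hgne)
    (div_apply_smul_of_homogeneous hfhom hghom)
  have hcrit := (hmax.isLocalMax (isOpen_compl_singleton.mem_nhds hz)).fderiv_eq_div_smul_fderiv
    (hf z) (hg z) (hgne z hz)
  have hre : ∀ v, RCLike.re (inner ℂ v (A z)) = f z / g z * RCLike.re (inner ℂ v (B z)) := by
    intro v
    have hv := DFunLike.congr_fun hcrit v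
    rw [smul_apply, hAgrad, hBgrad, smul_eq_mul] at hv
    rw [RCLike.re_to_complex, RCLike.re_to_complex]
    linarith
  exact ⟨z, hz, _, eq_ofReal_smul_of_re_inner_eq hre⟩

/-- A homogeneous gradient eigenvalue problem with nonvanishing denominator has
nonempty (real) spectrum. Here `A`, `B` are the conjugate co-gradients of the
real-valued functions `f`, `g`, both positively homogeneous of degree `k + 1`. -/
theorem gradient_spectrum_nonempty {n : ℕ} (hn : 1 ≤ n) (k : ℝ) (hk : 0 < k)
    (f g : EuclideanSpace ℂ (Fin n) → ℝ)
    (hf : Differentiable ℝ f) (hg : Differentiable ℝ g)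
    (hf0 : f 0 = 0) (hg0 : g 0 = 0)
    (hfhom : ∀ r : ℝ, 0 < r → ∀ z, f (r • z) = r ^ (k + 1) * f z)
    (hghom : ∀ r : ℝ, 0 < r → ∀ z, g (r • z) = r ^ (k + 1) * g z)
    (hgne : ∀ z : EuclideanSpace ℂ (Fin n), z ≠ 0 → g z ≠ 0)
    (A B : EuclideanSpace ℂ (Fin n) → EuclideanSpace ℂ (Fin n))
    (hAgrad : ∀ z v : EuclideanSpace ℂ (Fin n),
      fderiv ℝ f z v = 2 * (inner ℂ v (A z) : ℂ).re)
    (hBgrad : ∀ z v : EuclideanSpace ℂ (Fin n),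
      fderiv ℝ g z v = 2 * (inner ℂ v (B z) : ℂ).re) :
    ∃ z : EuclideanSpace ℂ (Fin n), z ≠ 0 ∧ ∃ lam : ℝ, A z = (lam : ℂ) • B z :=
  gradient_spectrum_nonempty_general hn k f g hf hg hfhom hghom hgne A B hAgrad hBgrad
end

section
/- Let l > 0 be real, let g : ℂⁿ → ℝ be differentiable (over the real scalars) with g(0) = 0 and g(z) ≠ 0 for all z ≠ 0, and let B : ℂⁿ → ℂⁿ satisfy Dg(z)[v] = 2·Re⟪v, B(z)⟫ for all z, v, with B(r·z) = r^l·B(z) for all real r > 0. Let A : ℂⁿ → ℂⁿ be any map such that ⟪z, A(z)⟫ ∈ ℝ and ⟪z, B(z)⟫ ∈ ℝ for every z ∈ ℂⁿ. Then every eigenvalue of the problem A(z) = λB(z) is real: if z ≠ 0 and λ ∈ ℂ satisfy A(z) = λ·B(z), then ⟪z, B(z)⟫ ≠ 0, λ ∈ ℝ, and λ = ⟪z, A(z)⟫ / ⟪z, B(z)⟫. -/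
/-! Differentiating `r ↦ g (r • z)` gives `2 r ^ l Re ⟪z, B z⟫` by homogeneity of `B`, so if
`⟪z, B z⟫` vanished, `g` would be constant on the segment `[0, z]` and `g z = g 0 = 0`.
Hence `⟪z, B z⟫` is a nonzero real number, and pairing `A z = λ B z` with `z` gives
`⟪z, A z⟫ = λ ⟪z, B z⟫` with both inner products real. -/

section Radial

variable {E : Type*} [NormedAddCommGroup E] [NormedSpace ℝ E]

theorem apply_eq_apply_zero_of_fderiv_smul_eq_zero {g : E → ℝ} (hg : Differentiable ℝ g)
    (z : E) (h : ∀ r ∈ Set.Ioo (0 : ℝ) 1, fderiv ℝ g (r • z) z = 0) : g z = g 0 := by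
  have hderiv : ∀ r : ℝ, HasDerivAt (fun r : ℝ => g (r • z)) (fderiv ℝ g (r • z) z) r :=
    fun r => (hg (r • z)).hasFDerivAt.comp_hasDerivAt r (by
      simpa only [id, one_smul] using (hasDerivAt_id r).smul_const z)
  obtain ⟨c, hc, hslope⟩ := exists_hasDerivAt_eq_slope (fun r : ℝ => g (r • z))
    (fun r => fderiv ℝ g (r • z) z) zero_lt_one
    (hg.continuous.comp (continuous_id.smul continuous_const)).continuousOn
    (fun r _ => hderiv r)
  rw [h c hc, eq_comm, div_eq_zero_iff, sub_eq_zero, one_smul, zero_smul, sub_zero] at hslope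
  exact hslope.resolve_right one_ne_zero

end Radial

section CoGradient

variable {E : Type*} [NormedAddCommGroup E] [InnerProductSpace ℂ E]

theorem fderiv_smul_apply_of_cogradient_homogeneous {g : E → ℝ} {B : E → E} {l : ℝ}
    (hBgrad : ∀ z v : E, fderiv ℝ g z v = 2 * (inner ℂ v (B z) : ℂ).re)
    (hBhom : ∀ r : ℝ, 0 < r → ∀ z : E, B (r • z) = (r ^ l : ℝ) • B z)
    {r : ℝ} (hr : 0 < r) (z : E) :
    fderiv ℝ g (r • z) z = 2 * r ^ l * (inner ℂ z (B z) : ℂ).re := by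
  rw [hBgrad, hBhom r hr, inner_smul_right_eq_smul, Complex.smul_re, smul_eq_mul, mul_assoc]

theorem re_inner_cogradient_ne_zero {g : E → ℝ} {B : E → E} {l : ℝ}
    (hg : Differentiable ℝ g)
    (hBgrad : ∀ z v : E, fderiv ℝ g z v = 2 * (inner ℂ v (B z) : ℂ).re)
    (hBhom : ∀ r : ℝ, 0 < r → ∀ z : E, B (r • z) = (r ^ l : ℝ) • B z)
    {z : E} (hz : g z ≠ g 0) : (inner ℂ z (B z) : ℂ).re ≠ 0 := by
  intro h0
  refine hz (apply_eq_apply_zero_of_fderiv_smul_eq_zero hg z fun r hr => ?_)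
  rw [fderiv_smul_apply_of_cogradient_homogeneous hBgrad hBhom hr.1, h0, mul_zero]

end CoGradient

theorem eigenvalues_real_general {n : ℕ} (l : ℝ)
    (g : EuclideanSpace ℂ (Fin n) → ℝ)
    (hg : Differentiable ℝ g) (hg0 : g 0 = 0)
    (hgne : ∀ z : EuclideanSpace ℂ (Fin n), z ≠ 0 → g z ≠ 0)
    (B : EuclideanSpace ℂ (Fin n) → EuclideanSpace ℂ (Fin n))
    (hBgrad : ∀ z v : EuclideanSpace ℂ (Fin n),
      fderiv ℝ g z v = 2 * (inner ℂ v (B z) : ℂ).re)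
    (hBhom : ∀ r : ℝ, 0 < r → ∀ z : EuclideanSpace ℂ (Fin n),
      B (r • z) = (r ^ l : ℝ) • B z)
    (A : EuclideanSpace ℂ (Fin n) → EuclideanSpace ℂ (Fin n))
    (hAreal : ∀ z : EuclideanSpace ℂ (Fin n), (inner ℂ z (A z) : ℂ).im = 0)
    (hBreal : ∀ z : EuclideanSpace ℂ (Fin n), (inner ℂ z (B z) : ℂ).im = 0) :
    ∀ z : EuclideanSpace ℂ (Fin n), z ≠ 0 → ∀ lam : ℂ, A z = lam • B z →
      (inner ℂ z (B z) : ℂ) ≠ 0 ∧ lam.im = 0 ∧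
        lam = (inner ℂ z (A z) : ℂ) / (inner ℂ z (B z) : ℂ) := by
  intro z hz lam hA
  have hre : (inner ℂ z (B z) : ℂ).re ≠ 0 :=
    re_inner_cogradient_ne_zero hg hBgrad hBhom (by rw [hg0]; exact hgne z hz)
  have hBz : (inner ℂ z (B z) : ℂ) ≠ 0 := fun h => hre (by rw [h, Complex.zero_re])
  have hAz : (inner ℂ z (A z) : ℂ) = lam * inner ℂ z (B z) := by
    rw [hA, inner_smul_right]
  have him : lam.im * (inner ℂ z (B z) : ℂ).re = 0 := by
    simpa only [hAz, Complex.mul_im, hBreal z, mul_zero, zero_add] using hAreal z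
  exact ⟨hBz, (mul_eq_zero.1 him).resolve_right hre, by rw [hAz, mul_div_cancel_right₀ _ hBz]⟩

/-- Nonlinear Hermitianity: if `B` is the conjugate co-gradient of a
homogeneous `g` that does not vanish away from `0`, and `⟪z, A z⟫`, `⟪z, B z⟫`
are real for all `z`, then every eigenvalue of `A(z) = λ B(z)` is real and
equals `⟪z, A z⟫ / ⟪z, B z⟫` at its eigenvector. -/
theorem eigenvalues_real {n : ℕ} (l : ℝ) (hl : 0 < l)
    (g : EuclideanSpace ℂ (Fin n) → ℝ)
    (hg : Differentiable ℝ g) (hg0 : g 0 = 0)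
    (hgne : ∀ z : EuclideanSpace ℂ (Fin n), z ≠ 0 → g z ≠ 0)
    (B : EuclideanSpace ℂ (Fin n) → EuclideanSpace ℂ (Fin n))
    (hBgrad : ∀ z v : EuclideanSpace ℂ (Fin n),
      fderiv ℝ g z v = 2 * (inner ℂ v (B z) : ℂ).re)
    (hBhom : ∀ r : ℝ, 0 < r → ∀ z : EuclideanSpace ℂ (Fin n),
      B (r • z) = (r ^ l : ℝ) • B z)
    (A : EuclideanSpace ℂ (Fin n) → EuclideanSpace ℂ (Fin n))
    (hAreal : ∀ z : EuclideanSpace ℂ (Fin n), (inner ℂ z (A z) : ℂ).im = 0)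
    (hBreal : ∀ z : EuclideanSpace ℂ (Fin n), (inner ℂ z (B z) : ℂ).im = 0) :
    ∀ z : EuclideanSpace ℂ (Fin n), z ≠ 0 → ∀ lam : ℂ, A z = lam • B z →
      (inner ℂ z (B z) : ℂ) ≠ 0 ∧ lam.im = 0 ∧
        lam = (inner ℂ z (A z) : ℂ) / (inner ℂ z (B z) : ℂ) :=
  eigenvalues_real_general l g hg hg0 hgne B hBgrad hBhom A hAreal hBreal
end

section
/- Let M be an n×n complex matrix and let p be real with 1 < p. Define A(z) ∈ ℂⁿ by A(z) = Mᴴ·w where wᵢ = |(M·z)ᵢ|^{p−2}·(M·z)ᵢ, and B(z) ∈ ℂⁿ by B(z)ᵢ = |zᵢ|^{p−2}·zᵢ (with the convention 0^{p−2}·0 = 0). If z ≠ 0 and λ ∈ ℂ satisfy A(z) = λ·B(z), then λ is real, nonnegative, and λ = (Σᵢ |(M·z)ᵢ|^p) / (Σᵢ |zᵢ|^p), i.e. every eigenvalue of the matrix p-Laplacian eigenvalue problem Mᴴ(|Mz|^{p−2}∘Mz) = λ|z|^{p−2}∘z equals the p-norm quotient ‖Mz‖_p^p / ‖z‖_p^p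 at its eigenvector. -/
/-! Pairing both sides of the eigen-equation with `z` turns `A(z)` into `‖Mz‖ₚᵖ`
(move `Mᴴ` across the pairing) and `λ B(z)` into `λ ‖z‖ₚᵖ`, since `v̄ · |v|^{p-2} v = |v|^p`.
As `‖z‖ₚᵖ > 0`, `λ` is the quotient of two nonnegative reals. -/

open Matrix BigOperators

/-- `phi p v = |v|^(p-2) · v`, with the convention `0^(p-2) · 0 = 0`. -/
noncomputable def phi (p : ℝ) (v : ℂ) : ℂ :=
  ((‖v‖ ^ (p - 2) : ℝ) : ℂ) * v

lemma star_mul_phi {p : ℝ} (hp : p ≠ 0) (v : ℂ) : star v * phi p v = ((‖v‖ ^ p : ℝ) : ℂ) := by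
  rcases eq_or_ne v 0 with rfl | hv
  · simp [phi, Real.zero_rpow hp]
  · have hv : 0 < ‖v‖ := norm_pos_iff.mpr hv
    calc star v * phi p v = ((‖v‖ ^ (p - 2) * ‖v‖ ^ (2 : ℝ) : ℝ) : ℂ) := by
          rw [phi, Real.rpow_two, Complex.star_def, mul_left_comm, Complex.conj_mul']
          push_cast; ring
      _ = ((‖v‖ ^ p : ℝ) : ℂ) := by rw [← Real.rpow_add hv, sub_add_cancel]

lemma star_dotProduct_phi {ι : Type*} [Fintype ι] {p : ℝ} (hp : p ≠ 0) (w : ι → ℂ) :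
    star w ⬝ᵥ (fun i => phi p (w i)) = ((∑ i, ‖w i‖ ^ p : ℝ) : ℂ) := by
  simp only [dotProduct, Pi.star_apply, star_mul_phi hp, Complex.ofReal_sum]

lemma sum_norm_rpow_pos {ι : Type*} [Fintype ι] (p : ℝ) {w : ι → ℂ} (hw : w ≠ 0) :
    0 < ∑ i, ‖w i‖ ^ p := by
  obtain ⟨i, hi⟩ := Function.ne_iff.mp hw
  exact Finset.sum_pos' (fun j _ => by positivity)
    ⟨i, Finset.mem_univ i, Real.rpow_pos_of_pos (norm_pos_iff.mpr hi) p⟩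

/-- Every eigenvalue of the matrix `p`-Laplacian eigenvalue problem
`Mᴴ(|Mz|^{p−2} ∘ Mz) = λ (|z|^{p−2} ∘ z)` is real, nonnegative, and equals the
`p`-norm quotient `‖Mz‖ₚᵖ / ‖z‖ₚᵖ` at its eigenvector. -/
theorem pLaplacian_eigenvalue {n : ℕ} (M : Matrix (Fin n) (Fin n) ℂ)
    (p : ℝ) (hp : 1 < p) (z : Fin n → ℂ) (hz : z ≠ 0) (lam : ℂ)
    (heig : Mᴴ.mulVec (fun i => phi p (M.mulVec z i)) = lam • fun i => phi p (z i)) :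
    lam.im = 0 ∧ 0 ≤ lam.re ∧
      lam = (((∑ i, ‖M.mulVec z i‖ ^ p) / (∑ i, ‖z i‖ ^ p) : ℝ) : ℂ) := by
  have hp0 : p ≠ 0 := (zero_lt_one.trans hp).ne'
  have hT := sum_norm_rpow_pos p hz
  have hpair : lam * ((∑ i, ‖z i‖ ^ p : ℝ) : ℂ) = ((∑ i, ‖M.mulVec z i‖ ^ p : ℝ) : ℂ) := by
    have := congrArg (star z ⬝ᵥ ·) heig
    simp only [dotProduct_smul, smul_eq_mul, star_dotProduct_phi hp0, dotProduct_mulVec,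
      ← star_mulVec] at this
    exact this.symm
  have hlam : lam = (((∑ i, ‖M.mulVec z i‖ ^ p) / (∑ i, ‖z i‖ ^ p) : ℝ) : ℂ) := by
    rw [Complex.ofReal_div, eq_div_iff (by exact_mod_cast hT.ne'), hpair]
  refine ⟨by rw [hlam, Complex.ofReal_im], ?_, hlam⟩
  rw [hlam, Complex.ofReal_re]
  exact div_nonneg (Finset.sum_nonneg fun i _ => by positivity) hT.le
end

section
/- Let M be an n×n complex matrix with n ≥ 1 and let p be real with 1 < p. Define A(z) = Mᴴ·w with wᵢ = |(M·z)ᵢ|^{p−2}·(M·z)ᵢ and B(z)ᵢ = |zᵢ|^{p−2}·zᵢ (convention 0^{p−2}·0 = 0), and for z ≠ 0 let Q(z) = (Σᵢ |(M·z)ᵢ|^p)/(Σᵢ |zᵢ|^p). Let λ* = sup { Q(z) : z ≠ 0 }. Then λ* is finite and is an eigenvalue of the problem A(z) = λB(z), i.e. there exists z ≠ 0 with A(z) = λ*·B(z); moreover every eigenvalue λ of the problem satisfies λ = Q(z) for its eigenvector z, and hence every eigenvalue is a real number ≤ λ*. -/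
open Matrix BigOperators

/-- The nonlinear map `z ↦ Mᴴ(|Mz|^{p−2} ∘ Mz)`. -/
noncomputable def Amap {n : ℕ} (M : Matrix (Fin n) (Fin n) ℂ) (p : ℝ)
    (z : Fin n → ℂ) : Fin n → ℂ :=
  Mᴴ.mulVec fun i => phi p (M.mulVec z i)

/-- The nonlinear map `z ↦ |z|^{p−2} ∘ z`. -/
noncomputable def Bmap {n : ℕ} (p : ℝ) (z : Fin n → ℂ) : Fin n → ℂ :=
  fun i => phi p (z i)

/-- The `p`-norm quotient `Q(z) = ‖Mz‖ₚᵖ / ‖z‖ₚᵖ`. -/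
noncomputable def Qquot {n : ℕ} (M : Matrix (Fin n) (Fin n) ℂ) (p : ℝ)
    (z : Fin n → ℂ) : ℝ :=
  (∑ i, ‖M.mulVec z i‖ ^ p) / (∑ i, ‖z i‖ ^ p)

/-!
`Q` is invariant under `z ↦ c • z` for `c ≠ 0`, so its supremum over `z ≠ 0` is its maximum on the
compact unit sphere, attained at some `z₀`. The function `z ↦ ‖Mz‖ₚᵖ - Q(z₀) ‖z‖ₚᵖ` is then `≤ 0`
everywhere and vanishes at `z₀`, so its real derivative vanishes at `z₀`. As the derivative of
`‖z‖ₚᵖ` is `v ↦ p Re ⟪B z, v⟫`, and that of `‖Mz‖ₚᵖ` is `v ↦ p Re ⟪A z, v⟫` by adjunction, this says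
`A z₀ = Q(z₀) B z₀`. Conversely, pairing `A z = λ B z` with `z` gives `‖Mz‖ₚᵖ = conj λ ‖z‖ₚᵖ`,
so `λ = Q(z)`.
-/

noncomputable def powSum {ι : Type*} [Fintype ι] (p : ℝ) (z : ι → ℂ) : ℝ :=
  ∑ i, ‖z i‖ ^ p

noncomputable def powSumDeriv {ι : Type*} [Fintype ι] (p : ℝ) (z : ι → ℂ) : (ι → ℂ) →L[ℝ] ℝ :=
  ∑ i, ((p * ‖z i‖ ^ (p - 2)) • innerSL ℝ (z i)).comp (ContinuousLinearMap.proj i)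

section powSum

variable {ι : Type*} [Fintype ι] {p : ℝ}

theorem powSum_pos {z : ι → ℂ} (hz : z ≠ 0) : 0 < powSum p z := by
  obtain ⟨i, hi⟩ := Function.ne_iff.mp hz
  exact Finset.sum_pos' (fun j _ => by positivity)
    ⟨i, Finset.mem_univ i, Real.rpow_pos_of_pos (norm_pos_iff.mpr hi) p⟩

theorem powSum_smul (c : ℂ) (z : ι → ℂ) : powSum p (c • z) = ‖c‖ ^ p * powSum p z := by
  simp only [powSum, Finset.mul_sum, Pi.smul_apply, smul_eq_mul, norm_mul,
    Real.mul_rpow (norm_nonneg _) (norm_nonneg _)]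

theorem continuous_powSum (hp : 0 ≤ p) : Continuous (powSum (ι := ι) p) :=
  continuous_finsetSum _ fun i _ => (continuous_apply i).norm.rpow_const fun _ => Or.inr hp

theorem hasFDerivAt_powSum (hp : 1 < p) (z : ι → ℂ) :
    HasFDerivAt (powSum p) (powSumDeriv p z) z :=
  HasFDerivAt.fun_sum fun i _ =>
    (hasFDerivAt_norm_rpow (z i) hp).comp (g := fun w : ℂ => ‖w‖ ^ p) z (hasFDerivAt_apply i z)

theorem powSumDeriv_apply (z v : ι → ℂ) :
    powSumDeriv p z v = p * (star (fun i => phi p (z i)) ⬝ᵥ v).re := by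
  simp only [powSumDeriv, _root_.sum_apply, ContinuousLinearMap.comp_apply, _root_.smul_apply,
    ContinuousLinearMap.proj_apply, coe_innerSL_apply, smul_eq_mul, dotProduct, Complex.re_sum,
    Finset.mul_sum]
  refine Finset.sum_congr rfl fun i _ => ?_
  rw [Pi.star_apply, phi, star_mul', Complex.star_def, Complex.conj_ofReal, mul_assoc (G := ℂ),
    Complex.re_ofReal_mul, Complex.inner, mul_comm (v i), mul_assoc]

end powSum

theorem star_phi_mul_self {p : ℝ} (hp : p ≠ 0) (w : ℂ) :
    star (phi p w) * w = ((‖w‖ ^ p : ℝ) : ℂ) := by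
  rcases eq_or_ne w 0 with rfl | hw
  · simp [phi, Real.zero_rpow hp]
  · rw [phi, star_mul', mul_assoc, Complex.star_def, Complex.conj_mul', Complex.conj_ofReal,
      ← Complex.ofReal_pow, ← Complex.ofReal_mul, ← Real.rpow_natCast,
      ← Real.rpow_add (norm_pos_iff.mpr hw)]
    norm_num

theorem eq_zero_of_forall_re_star_dotProduct_eq_zero {ι : Type*} [Fintype ι] {u : ι → ℂ}
    (h : ∀ v, (star u ⬝ᵥ v).re = 0) : u = 0 := by
  open scoped ComplexOrder in
  have hreal := Complex.eq_re_of_ofReal_le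
    (Complex.ofReal_zero ▸ dotProduct_star_self_nonneg u)
  rwa [h u, Complex.ofReal_zero, dotProduct_star_self_eq_zero] at hreal

section Quotient

variable {n : ℕ} {p : ℝ}

theorem Qquot_eq (M : Matrix (Fin n) (Fin n) ℂ) (z : Fin n → ℂ) :
    Qquot M p z = powSum p (M *ᵥ z) / powSum p z :=
  rfl

theorem Qquot_smul (M : Matrix (Fin n) (Fin n) ℂ) {c : ℂ} (hc : c ≠ 0) (z : Fin n → ℂ) :
    Qquot M p (c • z) = Qquot M p z := by
  rw [Qquot_eq, Qquot_eq, mulVec_smul, powSum_smul, powSum_smul,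
    mul_div_mul_left _ _ (Real.rpow_pos_of_pos (norm_pos_iff.mpr hc) p).ne']

theorem star_Amap_dotProduct (M : Matrix (Fin n) (Fin n) ℂ) (z v : Fin n → ℂ) :
    star (Amap M p z) ⬝ᵥ v = star (Bmap p (M *ᵥ z)) ⬝ᵥ (M *ᵥ v) := by
  rw [Amap, star_mulVec, conjTranspose_conjTranspose, dotProduct_mulVec]
  rfl

theorem star_Bmap_dotProduct_self (hp : p ≠ 0) (z : Fin n → ℂ) :
    star (Bmap p z) ⬝ᵥ z = powSum p z := by
  simp only [dotProduct, Bmap, Pi.star_apply, star_phi_mul_self hp, powSum, Complex.ofReal_sum]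

theorem eigenvalue_eq_Qquot (M : Matrix (Fin n) (Fin n) ℂ) (hp : p ≠ 0) {z : Fin n → ℂ}
    (hz : z ≠ 0) {lam : ℂ} (h : Amap M p z = lam • Bmap p z) : lam = Qquot M p z := by
  have hpair : star (Amap M p z) ⬝ᵥ z = star lam * powSum p z := by
    rw [h, star_smul, smul_dotProduct, star_Bmap_dotProduct_self hp, smul_eq_mul]
  rw [star_Amap_dotProduct, star_Bmap_dotProduct_self hp] at hpair
  have hstar : star lam = Qquot M p z := by
    rw [Qquot_eq, Complex.ofReal_div, eq_div_iff (by exact_mod_cast (powSum_pos hz).ne')]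
    exact hpair.symm
  simpa using congr_arg star hstar

theorem exists_isMaxOn_Qquot [NeZero n] (M : Matrix (Fin n) (Fin n) ℂ) (hp : 0 ≤ p) :
    ∃ z₀, z₀ ≠ 0 ∧ IsMaxOn (Qquot M p) {0}ᶜ z₀ := by
  have hcont : ContinuousOn (Qquot M p) {0}ᶜ :=
    ContinuousOn.div
      ((continuous_powSum hp).comp (mulVecLin M).continuous_of_finiteDimensional).continuousOn
      (continuous_powSum hp).continuousOn fun z hz => (powSum_pos hz).ne'
  obtain ⟨z₀, hz₀, hmax⟩ := (isCompact_sphere (0 : Fin n → ℂ) 1).exists_isMaxOn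
    (NormedSpace.sphere_nonempty.mpr zero_le_one)
    (hcont.mono fun z hz => ne_zero_of_mem_unit_sphere ⟨z, hz⟩)
  refine ⟨z₀, ne_zero_of_mem_unit_sphere ⟨z₀, hz₀⟩, fun z (hz : z ≠ 0) => ?_⟩
  change Qquot M p z ≤ Qquot M p z₀
  rw [← Qquot_smul M (inv_ne_zero (Complex.ofReal_ne_zero.mpr (norm_ne_zero_iff.mpr hz)))]
  exact hmax (by simp [norm_smul, hz])

theorem Amap_eq_smul_Bmap_of_isMaxOn (M : Matrix (Fin n) (Fin n) ℂ) (hp : 1 < p)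
    {z₀ : Fin n → ℂ} (hz₀ : z₀ ≠ 0) (hmax : IsMaxOn (Qquot M p) {0}ᶜ z₀) :
    Amap M p z₀ = ((Qquot M p z₀ : ℝ) : ℂ) • Bmap p z₀ := by
  set lam := Qquot M p z₀
  let T : (Fin n → ℂ) →L[ℝ] (Fin n → ℂ) :=
    ((mulVecLin M).restrictScalars ℝ).toContinuousLinearMap
  have hle : ∀ z, powSum p (M *ᵥ z) - lam * powSum p z ≤ 0 := by
    intro z
    rcases eq_or_ne z 0 with rfl | hz
    · simp [powSum, Real.zero_rpow (by linarith : p ≠ 0)]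
    · have hQ := hmax (show z ∈ ({0}ᶜ : Set _) from hz)
      rw [Set.mem_ofPred, Qquot_eq, div_le_iff₀ (powSum_pos hz)] at hQ
      linarith
  have hlam : lam * powSum p z₀ = powSum p (M *ᵥ z₀) :=
    div_mul_cancel₀ _ (powSum_pos hz₀).ne'
  have hlocal : IsLocalMax (fun z => powSum p (M *ᵥ z) - lam * powSum p z) z₀ :=
    Filter.Eventually.of_forall fun z => (hle z).trans (by simp only [hlam, sub_self, le_refl])
  have hcrit := hlocal.hasFDerivAt_eq_zero <|
    ((hasFDerivAt_powSum hp (M *ᵥ z₀)).comp z₀ T.hasFDerivAt).sub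
      ((hasFDerivAt_powSum hp z₀).const_mul lam)
  rw [← sub_eq_zero]
  refine eq_zero_of_forall_re_star_dotProduct_eq_zero fun v => ?_
  have hv := DFunLike.congr_fun hcrit v
  simp only [_root_.sub_apply, ContinuousLinearMap.comp_apply, _root_.smul_apply,
    _root_.zero_apply, powSumDeriv_apply, smul_eq_mul] at hv
  rw [mul_left_comm, ← mul_sub, mul_eq_zero] at hv
  rw [star_sub, sub_dotProduct, star_smul, smul_dotProduct, star_Amap_dotProduct, Complex.star_def,
    Complex.conj_ofReal, smul_eq_mul, Complex.sub_re, Complex.re_ofReal_mul]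
  exact hv.resolve_left (by linarith)

end Quotient

/-- The supremum `λ* = sup {Q(z) : z ≠ 0}` of the `p`-norm quotients is finite,
is attained as an eigenvalue of the matrix `p`-Laplacian problem, and every
eigenvalue equals `Q` at its eigenvector, hence is real and at most `λ*`. -/
theorem pLaplacian_largest_eigenvalue {n : ℕ} (hn : 1 ≤ n)
    (M : Matrix (Fin n) (Fin n) ℂ) (p : ℝ) (hp : 1 < p) :
    BddAbove {q : ℝ | ∃ z : Fin n → ℂ, z ≠ 0 ∧ q = Qquot M p z} ∧
    (∃ z : Fin n → ℂ, z ≠ 0 ∧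
      Amap M p z =
        ((sSup {q : ℝ | ∃ z : Fin n → ℂ, z ≠ 0 ∧ q = Qquot M p z} : ℝ) : ℂ) • Bmap p z) ∧
    (∀ z : Fin n → ℂ, z ≠ 0 → ∀ lam : ℂ, Amap M p z = lam • Bmap p z →
      lam = ((Qquot M p z : ℝ) : ℂ) ∧
        Qquot M p z ≤ sSup {q : ℝ | ∃ z : Fin n → ℂ, z ≠ 0 ∧ q = Qquot M p z}) := by
  have : NeZero n := ⟨by omega⟩
  obtain ⟨z₀, hz₀, hmax⟩ := exists_isMaxOn_Qquot M (p := p) (by linarith)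
  have hgreatest :
      IsGreatest {q : ℝ | ∃ z : Fin n → ℂ, z ≠ 0 ∧ q = Qquot M p z} (Qquot M p z₀) :=
    ⟨⟨z₀, hz₀, rfl⟩, by rintro _ ⟨z, hz, rfl⟩; exact hmax hz⟩
  rw [hgreatest.csSup_eq]
  exact ⟨hgreatest.bddAbove, ⟨z₀, hz₀, Amap_eq_smul_Bmap_of_isMaxOn M hp hz₀ hmax⟩,
    fun z hz lam h => ⟨eigenvalue_eq_Qquot M (by linarith) hz h, hgreatest.2 ⟨z, hz, rfl⟩⟩⟩
end

section
/- Let M and M₂ be n×n complex matrices and let p be real with 1 < p. Consider the nonlinear eigenvalue problem Mᴴ·(d(z)∘(M·z)) = λ·(|z|^{p−2}∘z), where d(z)ᵢ = |(M₂·z)ᵢ|^{p−2} and ∘ is the entrywise (Hadamard) product (convention 0^{p−2}·0 = 0 for the right-hand side). If z ≠ 0 and λ ∈ ℂ satisfy this equation, then λ is real and λ ≥ 0. -/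
open Matrix BigOperators

lemma star_dotProduct_ofReal_mul {ι : Type*} [Fintype ι] (w : ι → ℝ) (u : ι → ℂ) :
    star u ⬝ᵥ (fun i => (w i : ℂ) * u i) = ((∑ i, w i * ‖u i‖ ^ 2 : ℝ) : ℂ) := by
  push_cast
  refine Finset.sum_congr rfl fun i _ => ?_
  rw [Pi.star_apply, mul_left_comm, Complex.star_def, Complex.conj_mul']

lemma sum_rpow_norm_mul_sq_pos {ι : Type*} [Fintype ι] (q : ℝ) {u : ι → ℂ} (hu : u ≠ 0) :
    0 < ∑ i, ‖u i‖ ^ q * ‖u i‖ ^ 2 := by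
  obtain ⟨i, hui⟩ := Function.ne_iff.mp hu
  have hi : 0 < ‖u i‖ := norm_pos_iff.mpr hui
  exact Finset.sum_pos' (fun j _ => by positivity) ⟨i, Finset.mem_univ i, by positivity⟩

theorem eigenvalues_real_nonneg_general {n : ℕ} (M M₂ : Matrix (Fin n) (Fin n) ℂ)
    (p : ℝ) (z : Fin n → ℂ) (hz : z ≠ 0) (lam : ℂ)
    (heig : Mᴴ.mulVec
        (fun i => ((‖M₂.mulVec z i‖ ^ (p - 2) : ℝ) : ℂ) * M.mulVec z i) =
      lam • fun i => phi p (z i)) :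
    lam.im = 0 ∧ 0 ≤ lam.re := by
  set S := ∑ i, ‖M₂.mulVec z i‖ ^ (p - 2) * ‖M.mulVec z i‖ ^ 2
  set T := ∑ i, ‖z i‖ ^ (p - 2) * ‖z i‖ ^ 2
  have hS : 0 ≤ S := Finset.sum_nonneg fun i _ => by positivity
  have hT : 0 < T := sum_rpow_norm_mul_sq_pos (p - 2) hz
  have hpair : (S : ℂ) = lam * T := by
    have h := congrArg (star z ⬝ᵥ ·) heig
    simpa only [dotProduct_mulVec, ← star_mulVec, star_dotProduct_ofReal_mul, dotProduct_smul,
      phi, smul_eq_mul] using h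
  have hlam : lam = ((S / T : ℝ) : ℂ) := by
    rw [Complex.ofReal_div, hpair, mul_div_cancel_right₀ _ (Complex.ofReal_ne_zero.mpr hT.ne')]
  rw [hlam, Complex.ofReal_im, Complex.ofReal_re]
  exact ⟨rfl, div_nonneg hS hT.le⟩

/-- For the nonlinear eigenvalue problem `Mᴴ(|M₂z|^{p−2} ∘ Mz) = λ (|z|^{p−2} ∘ z)`
(the problem `M₁(|M₂z|^{p−2} ∘ M₃z) = λ |z|^{p−2} ∘ z` with `M₃ = M₁ᴴ = M`),
every eigenvalue is real and nonnegative. -/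
theorem eigenvalues_real_nonneg {n : ℕ} (M M₂ : Matrix (Fin n) (Fin n) ℂ)
    (p : ℝ) (hp : 1 < p) (z : Fin n → ℂ) (hz : z ≠ 0) (lam : ℂ)
    (heig : Mᴴ.mulVec
        (fun i => ((‖M₂.mulVec z i‖ ^ (p - 2) : ℝ) : ℂ) * M.mulVec z i) =
      lam • fun i => phi p (z i)) :
    lam.im = 0 ∧ 0 ≤ lam.re :=
  eigenvalues_real_nonneg_general M M₂ p z hz lam heig
end

section
/- Let M and M₂ be 2×2 complex matrices and let p be real with p ≥ 2. Then the nonlinear eigenvalue problem Mᴴ·(d(z)∘(M·z)) = λ·(|z|^{p−2}∘z) on ℂ², where d(z)ᵢ = |(M₂·z)ᵢ|^{p−2}, has nonempty spectrum: there exist z ∈ ℂ² with z ≠ 0 and λ ∈ ℂ satisfying the equation. -/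
/-!
Write `F` (`nonlinearOp`) for the left-hand side and `φ = phi p`, applied componentwise; both
are homogeneous, `F (t • z) = φ t • F z`. A nonzero `z` is an eigenvector exactly when `F z` and
`φ z` are parallel, i.e. when the determinant `D z = φ(z₁) F(z)₀ - φ(z₀) F(z)₁` (`eigenDefect`)
vanishes, and `D (t • z) = φ(t)² D z`. If `D (0, 1) = 0` we are done. Otherwise homogeneity gives
`D (1, w) = φ(w)² D (w⁻¹, 1)`, so on a large circle `D (1, w)` is a small perturbation of a
nonzero multiple of `w²`. Since `w²` winds twice around the origin, `w ↦ D (1, w)` has a zero, by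
the topological form of Rouché's theorem: a nonvanishing continuous function on `ℂ` has a
continuous logarithm, which `w²` does not have on a circle.
-/

open Matrix BigOperators

open Complex in
theorem Complex.exists_eq_zero_of_norm_sub_mul_pow_lt {f : ℂ → ℂ} (hf : Continuous f) {R : ℝ}
    (hR : 0 < R) {c : ℂ} {k : ℕ} (hk : k ≠ 0)
    (h : ∀ w, ‖w‖ = R → ‖f w - c * w ^ k‖ < ‖c * w ^ k‖) : ∃ w, f w = 0 := by
  by_contra! hf0
  obtain ⟨θ, ⟨-, hθ⟩, -⟩ := isCoveringMapOn_exp.existsUnique_continuousMap_lifts ⟨f, hf⟩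
    (a₀ := 0) (exp_log (hf0 0)) (by simpa using hf0)
  have hθ_exp : ∀ w, exp (θ w) = f w := fun w => congrFun hθ w
  set γ : ℝ → ℂ := fun t => R * exp (t * I) with hγ
  have hγ_norm (t : ℝ) : ‖γ t‖ = R := by simp [hγ, norm_exp_ofReal_mul_I, hR.le]
  have hγ_period : γ (2 * Real.pi) = γ 0 := by simp [hγ]
  have hg_ne (t : ℝ) : c * γ t ^ k ≠ 0 := by
    intro h0
    have := h _ (hγ_norm t)
    rw [h0, sub_zero, norm_zero] at this
    exact (norm_nonneg _).not_gt this
  have hslit (t : ℝ) : f (γ t) / (c * γ t ^ k) ∈ slitPlane := by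
    refine ball_one_subset_slitPlane ?_
    rw [Metric.mem_ball, dist_eq, div_sub_one (hg_ne t), norm_div,
      div_lt_one (norm_pos_iff.2 (hg_ne t))]
    exact h _ (hγ_norm t)
  set D : ℝ → ℂ := fun t => θ (γ t) - log (f (γ t) / (c * γ t ^ k)) - k * (t * I) with hD
  have hD_cont : Continuous D := by
    have hγc : Continuous γ := by fun_prop
    refine ((θ.continuous.comp hγc).sub (Continuous.clog ?_ hslit)).sub (by fun_prop)
    exact (hf.comp hγc).div (by fun_prop) hg_ne
  have hD_exp (t : ℝ) : exp (D t) = c * R ^ k := by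
    rw [hD]
    simp only
    rw [exp_sub, exp_sub, hθ_exp, exp_log (div_ne_zero (hf0 _) (hg_ne t)), hγ]
    simp only
    rw [mul_pow, ← exp_nat_mul]
    field_simp [hf0]
  -- `D` is a continuous logarithm of a constant, hence constant; yet `γ` closes up after `2π`
  -- while the term `k * (t * I)` does not.
  have := isCoveringMap_exp.const_of_comp hD_cont
    (fun a a' => Subtype.ext (by simp only [hD_exp])) (2 * Real.pi) 0
  simp only [hD, hγ_period] at this
  have : (k : ℂ) * (2 * Real.pi * I) = 0 := by push_cast at this; linear_combination -this
  simp [hk, Real.pi_ne_zero, I_ne_zero] at this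

lemma ofReal_norm_mul_rpow (q : ℝ) (s t : ℂ) :
    ((‖s * t‖ ^ q : ℝ) : ℂ) = ((‖s‖ ^ q : ℝ) : ℂ) * ((‖t‖ ^ q : ℝ) : ℂ) := by
  rw [norm_mul, Real.mul_rpow (norm_nonneg s) (norm_nonneg t), Complex.ofReal_mul]

lemma phi_mul (p : ℝ) (s t : ℂ) : phi p (s * t) = phi p s * phi p t := by
  simp only [phi, ofReal_norm_mul_rpow]
  ring

lemma phi_ne_zero (p : ℝ) {v : ℂ} (hv : v ≠ 0) : phi p v ≠ 0 := by
  have : (0 : ℝ) < ‖v‖ ^ (p - 2) := Real.rpow_pos_of_pos (norm_pos_iff.2 hv) _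
  exact mul_ne_zero (Complex.ofReal_ne_zero.2 this.ne') hv

lemma continuous_phi {p : ℝ} (hp : 2 ≤ p) : Continuous (phi p) := by
  have := Real.continuous_rpow_const (q := p - 2) (by linarith)
  unfold phi
  fun_prop

lemma exists_eq_smul_of_mul_eq_mul {K : Type*} [Field K] {a b : Fin 2 → K} (hb : b ≠ 0)
    (h : b 1 * a 0 = b 0 * a 1) : ∃ c : K, a = c • b := by
  by_cases hb0 : b 0 = 0
  · have hb1 : b 1 ≠ 0 := fun hb1 => hb (funext (Fin.forall_fin_two.2 ⟨hb0, hb1⟩))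
    have ha0 : a 0 = 0 := by simpa [hb0, hb1] using h
    refine ⟨a 1 / b 1, funext (Fin.forall_fin_two.2 ⟨?_, ?_⟩)⟩
    · simp [ha0, hb0]
    · exact (div_mul_cancel₀ _ hb1).symm
  · refine ⟨a 0 / b 0, funext (Fin.forall_fin_two.2 ⟨?_, ?_⟩)⟩
    · exact (div_mul_cancel₀ _ hb0).symm
    · simp only [Pi.smul_apply, smul_eq_mul]
      field_simp
      linear_combination -h

section

variable {ι : Type*} [Fintype ι] (M M₂ : Matrix ι ι ℂ) (p : ℝ)

noncomputable def nonlinearOp (z : ι → ℂ) : ι → ℂ :=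
  Mᴴ *ᵥ fun i => ((‖(M₂ *ᵥ z) i‖ ^ (p - 2) : ℝ) : ℂ) * (M *ᵥ z) i

lemma nonlinearOp_smul (t : ℂ) (z : ι → ℂ) :
    nonlinearOp M M₂ p (t • z) = phi p t • nonlinearOp M M₂ p z := by
  rw [nonlinearOp, nonlinearOp, ← mulVec_smul]
  congr 1
  ext i
  simp only [mulVec_smul, Pi.smul_apply, smul_eq_mul, ofReal_norm_mul_rpow, phi]
  ring

lemma continuous_nonlinearOp {p : ℝ} (hp : 2 ≤ p) : Continuous (nonlinearOp M M₂ p) := by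
  have := Real.continuous_rpow_const (q := p - 2) (by linarith)
  unfold nonlinearOp
  fun_prop

end

section

variable (M M₂ : Matrix (Fin 2) (Fin 2) ℂ) (p : ℝ)

noncomputable def eigenDefect (z : Fin 2 → ℂ) : ℂ :=
  phi p (z 1) * nonlinearOp M M₂ p z 0 - phi p (z 0) * nonlinearOp M M₂ p z 1

lemma eigenDefect_smul (t : ℂ) (z : Fin 2 → ℂ) :
    eigenDefect M M₂ p (t • z) = phi p t ^ 2 * eigenDefect M M₂ p z := by
  simp only [eigenDefect, nonlinearOp_smul, Pi.smul_apply, smul_eq_mul, phi_mul]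
  ring

lemma continuous_eigenDefect {p : ℝ} (hp : 2 ≤ p) : Continuous (eigenDefect M M₂ p) := by
  have := continuous_phi hp
  have := continuous_nonlinearOp M M₂ hp
  unfold eigenDefect
  fun_prop

lemma exists_eigenvalue_of_eigenDefect_eq_zero {z : Fin 2 → ℂ} (hz : z ≠ 0)
    (h : eigenDefect M M₂ p z = 0) :
    ∃ lam : ℂ, nonlinearOp M M₂ p z = lam • fun i => phi p (z i) := by
  refine exists_eq_smul_of_mul_eq_mul (fun h0 => hz (funext fun i => ?_)) (sub_eq_zero.1 h)
  by_contra hi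
  exact phi_ne_zero p hi (congrFun h0 i)

lemma exists_norm_eigenDefect_sub_lt {p : ℝ} (hp : 2 ≤ p)
    (hβ : eigenDefect M M₂ p ![0, 1] ≠ 0) :
    ∃ R > 0, ∀ w : ℂ, ‖w‖ = R →
      ‖eigenDefect M M₂ p ![1, w] -
          ((R ^ (p - 2) : ℝ) : ℂ) ^ 2 * eigenDefect M M₂ p ![0, 1] * w ^ 2‖ <
        ‖((R ^ (p - 2) : ℝ) : ℂ) ^ 2 * eigenDefect M M₂ p ![0, 1] * w ^ 2‖ := by
  set β := eigenDefect M M₂ p ![0, 1]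
  have hcont : ContinuousAt (fun u : ℂ => eigenDefect M M₂ p ![u, 1]) 0 :=
    ((continuous_eigenDefect M M₂ hp).comp (by fun_prop)).continuousAt
  obtain ⟨δ, hδ, hball⟩ := Metric.continuousAt_iff.1 hcont ‖β‖ (norm_pos_iff.2 hβ)
  refine ⟨2 / δ, by positivity, fun w hw => ?_⟩
  have hw0 : w ≠ 0 := by
    rintro rfl
    rw [norm_zero] at hw
    exact (div_pos two_pos hδ).ne' hw.symm
  have hsplit : ![1, w] = w • ![w⁻¹, 1] := by
    ext i; fin_cases i <;> simp [hw0]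
  have hphi : phi p w = (((2 / δ) ^ (p - 2) : ℝ) : ℂ) * w := by rw [phi, hw]
  have hnear : ‖eigenDefect M M₂ p ![w⁻¹, 1] - β‖ < ‖β‖ := by
    rw [← dist_eq_norm]
    refine hball ?_
    rw [dist_zero_right, norm_inv, hw, inv_div]
    linarith
  have hphi_pos : 0 < ‖phi p w ^ 2‖ := norm_pos_iff.2 (pow_ne_zero 2 (phi_ne_zero p hw0))
  calc _ = ‖phi p w ^ 2‖ * ‖eigenDefect M M₂ p ![w⁻¹, 1] - β‖ := by
          rw [hsplit, eigenDefect_smul, ← norm_mul, mul_sub, hphi]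
          ring_nf
    _ < ‖phi p w ^ 2‖ * ‖β‖ := mul_lt_mul_of_pos_left hnear hphi_pos
    _ = _ := by
          rw [← norm_mul, hphi]
          ring_nf

end

/-- In dimension `n = 2`, the nonlinear eigenvalue problem
`Mᴴ(|M₂z|^{p−2} ∘ Mz) = λ (|z|^{p−2} ∘ z)` has nonempty spectrum. -/
theorem spectrum_nonempty_dim_two (M M₂ : Matrix (Fin 2) (Fin 2) ℂ)
    (p : ℝ) (hp : 2 ≤ p) :
    ∃ z : Fin 2 → ℂ, z ≠ 0 ∧ ∃ lam : ℂ,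
      Mᴴ.mulVec
          (fun i => ((‖M₂.mulVec z i‖ ^ (p - 2) : ℝ) : ℂ) * M.mulVec z i) =
        lam • fun i => phi p (z i) := by
  by_cases hβ : eigenDefect M M₂ p ![0, 1] = 0
  · exact ⟨![0, 1], by simp, exists_eigenvalue_of_eigenDefect_eq_zero M M₂ p (by simp) hβ⟩
  obtain ⟨R, hR, hR_circle⟩ := exists_norm_eigenDefect_sub_lt M M₂ hp hβ
  obtain ⟨w, hw⟩ := Complex.exists_eq_zero_of_norm_sub_mul_pow_lt
    ((continuous_eigenDefect M M₂ hp).comp (by fun_prop)) hR two_ne_zero hR_circle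
  exact ⟨![1, w], by simp, exists_eigenvalue_of_eigenDefect_eq_zero M M₂ p (by simp) hw⟩
end

section
/- Let A₀, A₁, A₂ be n×n complex matrices and form the 2n×2n block matrices M = [[A₀, A₁],[0, I]], N = [[0, −A₂],[I, 0]], and P = [[I, 0],[0, −A₀ᴴ·A₂]]. Assume −A₀ᴴ·A₂ is positive definite. Then the P-weighted pairing (Mz, Nz)_P = (N·z)* · P · (M·z) is real for every z ∈ ℂ^{2n} if and only if A₂ᴴ·A₁ is a Hermitian matrix. -/
/-!
Writing `z = (x, y)`, the pairing expands to `-2 Re((A₂y)* A₀x) - y* (A₂ᴴA₁) y`, so its imaginary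
part is `-Im(y* (A₂ᴴA₁) y)` and does not depend on `x`. The claim thus reduces to the fact that a
complex matrix is Hermitian iff its quadratic form is real-valued.
-/

open Matrix
open scoped ComplexOrder

namespace Matrix

theorem isHermitian_iff_forall_im_star_dotProduct_mulVec_self_eq_zero {m : Type*} [Fintype m]
    [DecidableEq m] (B : Matrix m m ℂ) :
    B.IsHermitian ↔ ∀ y : m → ℂ, (star y ⬝ᵥ B *ᵥ y).im = 0 := by
  have hstar (v : m → ℂ) : star (B *ᵥ v) ⬝ᵥ v = star (star v ⬝ᵥ B *ᵥ v) := by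
    rw [star_dotProduct]
  rw [← isSymmetric_toEuclideanLin_iff, LinearMap.isSymmetric_iff_inner_map_self_real]
  refine (WithLp.equiv 2 (m → ℂ)).forall_congr fun y => ?_
  rw [EuclideanSpace.inner_eq_star_dotProduct, ofLp_toLpLin, toLin'_apply, Complex.conj_eq_iff_im,
    dotProduct_comm, hstar, Complex.star_def, Complex.conj_im, neg_eq_zero]
  rfl

end Matrix

section Pencil

variable {m : Type*} [Fintype m] [DecidableEq m]

/-- `(Mz, Nz)_P = (Nz)* P (Mz)` for `M = [[A₀, A₁],[0, I]]`, `N = [[0, −A₂],[I, 0]]` and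
`P = [[I, 0],[0, −A₀ᴴA₂]]`. -/
noncomputable def pencilPairing (A₀ A₁ A₂ : Matrix m m ℂ) (z : m ⊕ m → ℂ) : ℂ :=
  star (fromBlocks 0 (-A₂) 1 0 *ᵥ z) ⬝ᵥ
    fromBlocks 1 0 0 (-(A₀ᴴ * A₂)) *ᵥ fromBlocks A₀ A₁ 0 1 *ᵥ z

theorem pencilPairing_sumElim (A₀ A₁ A₂ : Matrix m m ℂ) (x y : m → ℂ) :
    pencilPairing A₀ A₁ A₂ (Sum.elim x y) =
      -(star (A₂ *ᵥ y) ⬝ᵥ A₀ *ᵥ x + star (star (A₂ *ᵥ y) ⬝ᵥ A₀ *ᵥ x))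
        - star y ⬝ᵥ (A₂ᴴ * A₁) *ᵥ y := by
  have hc : star (star (A₂ *ᵥ y) ⬝ᵥ A₀ *ᵥ x) = star x ⬝ᵥ (A₀ᴴ * A₂) *ᵥ y := by
    rw [star_dotProduct, star_star, star_mulVec, dotProduct_mulVec, vecMul_vecMul,
      ← dotProduct_mulVec]
  have hb : star (A₂ *ᵥ y) ⬝ᵥ A₁ *ᵥ y = star y ⬝ᵥ (A₂ᴴ * A₁) *ᵥ y := by
    rw [star_mulVec, dotProduct_mulVec, vecMul_vecMul, ← dotProduct_mulVec]
  simp only [pencilPairing, fromBlocks_mulVec, zero_mulVec, one_mulVec, zero_add, add_zero,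
    Sum.elim_comp_inl, Sum.elim_comp_inr, neg_mulVec, Function.star_sumElim,
    sumElim_dotProduct_sumElim]
  rw [hc, ← hb, star_neg, neg_dotProduct, dotProduct_add, dotProduct_neg]
  ring

theorem im_pencilPairing_sumElim (A₀ A₁ A₂ : Matrix m m ℂ) (x y : m → ℂ) :
    (pencilPairing A₀ A₁ A₂ (Sum.elim x y)).im = -(star y ⬝ᵥ (A₂ᴴ * A₁) *ᵥ y).im := by
  simp [pencilPairing_sumElim]

theorem forall_im_pencilPairing_eq_zero_iff (A₀ A₁ A₂ : Matrix m m ℂ) :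
    (∀ z, (pencilPairing A₀ A₁ A₂ z).im = 0) ↔
      ∀ y : m → ℂ, (star y ⬝ᵥ (A₂ᴴ * A₁) *ᵥ y).im = 0 := by
  refine ⟨fun h y => ?_, fun h z => ?_⟩
  · simpa [im_pencilPairing_sumElim] using h (Sum.elim 0 y)
  · rw [← Sum.elim_comp_inl_inr z, im_pencilPairing_sumElim, h, neg_zero]

end Pencil

theorem pencil_pairing_real_iff_general {n : ℕ} (A₀ A₁ A₂ : Matrix (Fin n) (Fin n) ℂ) :
    (∀ z : Fin n ⊕ Fin n → ℂ,
      (star ((Matrix.fromBlocks 0 (-A₂) 1 0).mulVec z) ⬝ᵥ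
        (Matrix.fromBlocks 1 0 0 (-(A₀ᴴ * A₂))).mulVec
          ((Matrix.fromBlocks A₀ A₁ 0 1).mulVec z)).im = 0) ↔
    (A₂ᴴ * A₁).IsHermitian :=
  (forall_im_pencilPairing_eq_zero_iff A₀ A₁ A₂).trans
    (isHermitian_iff_forall_im_star_dotProduct_mulVec_self_eq_zero _).symm

/-- For the linearization `M = [[A₀, A₁],[0, I]]`, `N = [[0, −A₂],[I, 0]]` of the
quadratic pencil `λ²A₂ + λA₁ + A₀`, with `P = [[I, 0],[0, −A₀ᴴA₂]]` positive
definite, the weighted pairing `(Mz, Nz)_P = (Nz)* P (Mz)` is real for all `z`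
iff `A₂ᴴA₁` is Hermitian. -/
theorem pencil_pairing_real_iff {n : ℕ} (A₀ A₁ A₂ : Matrix (Fin n) (Fin n) ℂ)
    (hP : (-(A₀ᴴ * A₂)).PosDef) :
    (∀ z : Fin n ⊕ Fin n → ℂ,
      (star ((Matrix.fromBlocks 0 (-A₂) 1 0).mulVec z) ⬝ᵥ
        (Matrix.fromBlocks 1 0 0 (-(A₀ᴴ * A₂))).mulVec
          ((Matrix.fromBlocks A₀ A₁ 0 1).mulVec z)).im = 0) ↔
    (A₂ᴴ * A₁).IsHermitian :=
  pencil_pairing_real_iff_general A₀ A₁ A₂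
end
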